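/- arXiv:2405.11759 — 4 statements merged into one kernel-verified Lean document; each statement's English description precedes it below -/
import Mathlib

section
/- Let X₁, X₂ be independent standard normal random variables, let α ∈ (0, 1/2), and let c = Φ⁻¹(1-α) where Φ is the standard normal CDF. Then for any μ₁, μ₂ ∈ ℝ with μ₁·μ₂ ≥ 0, the probability P((μ₁+X₁)·(μ₂+X₂) < 0 and |μ₁+X₁| > c and |μ₂+X₂| > c) is at most α. -/
open MeasureTheory ProbabilityTheory

/-- The standard normal distribution on ℝ. -/
noncomputable def stdGauss : Measure ℝ := gaussianReal 0 1

/-- Φ, the standard normal CDF. -/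
noncomputable def Φ : ℝ → ℝ := fun x => cdf stdGauss x

/-- The joint law of two independent standard normals. -/
noncomputable def P2 : Measure (ℝ × ℝ) := stdGauss.prod stdGauss

/-! A rejection needs one coordinate below `-c` and the other above `c`, so the rejection
probability is at most `Φ(-c-μ₁)Φ(μ₂-c) + Φ(μ₁-c)Φ(-c-μ₂)`. For `μ₁, μ₂ ≥ 0`, log-concavity of `Φ`
in the form `Φ(x-s)Φ(y) ≤ Φ(x)Φ(y-s)` (`x ≤ y`, `0 ≤ s`), which follows from the monotone
likelihood ratio of the Gaussian shift family, bounds the two products by `Φ(-c)Φ(μ₂-c-μ₁)` and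
`Φ(-c)Φ(μ₁-c-μ₂)`; since `c ≥ 0`, these two values of `Φ` sum to at most `1`. The case
`μ₁, μ₂ ≤ 0` follows by the symmetry `x ↦ -x`. -/

open Set

instance : IsProbabilityMeasure stdGauss := by
  unfold stdGauss; infer_instance

instance : NullSingletonClass stdGauss :=
  nullSingletonClass_gaussianReal one_ne_zero

lemma Φ_nonneg (t : ℝ) : 0 ≤ Φ t := cdf_nonneg _ _

lemma Φ_mono : Monotone Φ := monotone_cdf _

lemma stdGauss_Iic (t : ℝ) : stdGauss (Iic t) = ENNReal.ofReal (Φ t) :=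
  (ofReal_cdf _ t).symm

lemma stdGauss_map_neg : stdGauss.map (fun x => -x) = stdGauss := by
  simpa [stdGauss] using gaussianReal_map_neg (μ := 0) (v := 1)

lemma Φ_neg (t : ℝ) : Φ (-t) = 1 - Φ t := by
  calc Φ (-t) = (stdGauss.map (fun x => -x)).real (Iic (-t)) := by
        rw [stdGauss_map_neg]; exact cdf_eq_real _ _
    _ = stdGauss.real (Ioi t) := by
        rw [map_measureReal_apply measurable_neg measurableSet_Iic, neg_preimage, neg_Iic, neg_neg]
        exact measureReal_congr Ioi_ae_eq_Ici.symm
    _ = 1 - Φ t := by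
        rw [← compl_Iic, probReal_compl_eq_one_sub measurableSet_Iic, Φ, cdf_eq_real]

lemma Φ_zero : Φ 0 = 1 / 2 := by
  linarith [neg_zero (G := ℝ) ▸ Φ_neg 0]

lemma stdGauss_Ioi (t : ℝ) : stdGauss (Ioi t) = ENNReal.ofReal (Φ (-t)) := by
  rw [Φ_neg, ENNReal.ofReal_sub _ (Φ_nonneg t), ENNReal.ofReal_one, ← compl_Iic,
    prob_compl_eq_one_sub measurableSet_Iic, stdGauss_Iic]

lemma stdGauss_Ioc {a b : ℝ} (hab : a ≤ b) :
    stdGauss (Ioc a b) = ENNReal.ofReal (Φ b - Φ a) := by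
  rw [← Iic_sdiff_Iic, measure_sdiff (Iic_subset_Iic.2 hab) measurableSet_Iic.nullMeasurableSet
    (measure_ne_top _ _), stdGauss_Iic, stdGauss_Iic, ENNReal.ofReal_sub _ (Φ_nonneg a)]

lemma gaussianReal_one_apply (m : ℝ) {S : Set ℝ} (hS : MeasurableSet S) :
    gaussianReal m 1 S = stdGauss ((· + m) ⁻¹' S) := by
  rw [stdGauss, ← Measure.map_apply (measurable_add_const m) hS, gaussianReal_map_add_const,
    zero_add]

lemma gaussianPDFReal_zero_one_eq_exp_mul (m u : ℝ) :
    gaussianPDFReal 0 1 u = Real.exp (m ^ 2 / 2 - m * u) * gaussianPDFReal m 1 u := by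
  simp only [gaussianPDFReal, NNReal.coe_one, mul_one, sub_zero]
  rw [mul_left_comm, ← Real.exp_add]
  congr 3
  ring

lemma stdGauss_le_exp_mul_gaussianReal {m k : ℝ} {S : Set ℝ}
    (h : ∀ u ∈ S, m ^ 2 / 2 - m * u ≤ k) :
    stdGauss S ≤ ENNReal.ofReal (Real.exp k) * gaussianReal m 1 S := by
  rw [stdGauss, gaussianReal_apply 0 one_ne_zero, gaussianReal_apply m one_ne_zero,
    ← lintegral_const_mul _ (measurable_gaussianPDF m 1)]
  refine setLIntegral_mono ((measurable_gaussianPDF m 1).const_mul _) fun u hu => ?_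
  rw [gaussianPDF, gaussianPDF, ← ENNReal.ofReal_mul (Real.exp_pos k).le,
    gaussianPDFReal_zero_one_eq_exp_mul m u]
  gcongr
  · exact gaussianPDFReal_nonneg _ _ _
  · exact h u hu

lemma Φ_le_exp_mul_Φ_add {d : ℝ} (hd : 0 ≤ d) (t : ℝ) :
    Φ t ≤ Real.exp (d * t + d ^ 2 / 2) * Φ (t + d) := by
  have h := stdGauss_le_exp_mul_gaussianReal (m := -d) (S := Iic t) (k := d * t + d ^ 2 / 2)
    fun u (hu : u ≤ t) => by nlinarith [mul_le_mul_of_nonneg_left hu hd]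
  rwa [gaussianReal_one_apply _ measurableSet_Iic, preimage_add_const_Iic, sub_neg_eq_add,
    stdGauss_Iic, stdGauss_Iic, ← ENNReal.ofReal_mul (Real.exp_pos _).le,
    ENNReal.ofReal_le_ofReal_iff (by have := Φ_nonneg (t + d); positivity)] at h

lemma Φ_add_sub_Φ_le {d s : ℝ} (hd : 0 ≤ d) (hs : 0 ≤ s) (t : ℝ) :
    Φ (t + d) - Φ (t + d - s) ≤ Real.exp (-(d * (t - s) + d ^ 2 / 2)) * (Φ t - Φ (t - s)) := by
  have h := stdGauss_le_exp_mul_gaussianReal (m := d) (S := Ioc (t + d - s) (t + d))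
    (k := -(d * (t - s) + d ^ 2 / 2))
    fun v hv => by nlinarith [mul_le_mul_of_nonneg_left hv.1.le hd]
  rwa [gaussianReal_one_apply _ measurableSet_Ioc, preimage_add_const_Ioc, add_sub_cancel_right,
    sub_right_comm, add_sub_cancel_right, stdGauss_Ioc (by linarith), stdGauss_Ioc (by linarith),
    ← ENNReal.ofReal_mul (Real.exp_pos _).le, ENNReal.ofReal_le_ofReal_iff
      (mul_nonneg (Real.exp_pos _).le (sub_nonneg.2 (Φ_mono (by linarith))))] at h

lemma Φ_sub_mul_Φ_le {x y s : ℝ} (hs : 0 ≤ s) (hxy : x ≤ y) :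
    Φ (x - s) * Φ y ≤ Φ x * Φ (y - s) := by
  obtain ⟨d, hd, rfl⟩ : ∃ d, 0 ≤ d ∧ y = x + d := ⟨y - x, by linarith, by ring⟩
  -- the density ratio `φ u / φ (u + d) = exp (d * u + d ^ 2 / 2)` crosses `exp k` at `u = x - s`
  set k := d * (x - s) + d ^ 2 / 2
  have hlow : Φ (x - s) ≤ Real.exp k * Φ (x + d - s) := by
    simpa only [sub_add_eq_add_sub] using Φ_le_exp_mul_Φ_add hd (x - s)
  have hincr := Φ_add_sub_Φ_le hd hs x
  have hprod : Φ (x - s) * (Φ (x + d) - Φ (x + d - s)) ≤ Φ (x + d - s) * (Φ x - Φ (x - s)) :=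
    calc Φ (x - s) * (Φ (x + d) - Φ (x + d - s))
        ≤ (Real.exp k * Φ (x + d - s)) * (Real.exp (-k) * (Φ x - Φ (x - s))) :=
          mul_le_mul hlow hincr (sub_nonneg.2 (Φ_mono (by linarith)))
            (mul_nonneg (Real.exp_pos k).le (Φ_nonneg _))
      _ = Φ (x + d - s) * (Φ x - Φ (x - s)) := by
          rw [Real.exp_neg]; field_simp
  linear_combination hprod

lemma Φ_rejection_le_of_nonneg {a b c : ℝ} (hc : 0 ≤ c) (ha : 0 ≤ a) (hb : 0 ≤ b) :
    Φ (-c - a) * Φ (b - c) + Φ (a - c) * Φ (-c - b) ≤ Φ (-c) := by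
  have h₁ : Φ (-c - a) * Φ (b - c) ≤ Φ (-c) * Φ (b - c - a) :=
    Φ_sub_mul_Φ_le ha (by linarith)
  have h₂ : Φ (-c - b) * Φ (a - c) ≤ Φ (-c) * Φ (a - c - b) :=
    Φ_sub_mul_Φ_le hb (by linarith)
  have hsum : Φ (b - c - a) + Φ (a - c - b) ≤ 1 := by
    have := Φ_neg (b + c - a)
    rw [show -(b + c - a) = a - c - b by ring] at this
    linarith [Φ_mono (show b - c - a ≤ b + c - a by linarith)]
  linear_combination h₁ + h₂ + mul_le_mul_of_nonneg_left hsum (Φ_nonneg (-c))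

lemma Φ_rejection_le {a b c : ℝ} (hc : 0 ≤ c) (hab : 0 ≤ a * b) :
    Φ (-c - a) * Φ (b - c) + Φ (a - c) * Φ (-c - b) ≤ Φ (-c) := by
  rcases mul_nonneg_iff.1 hab with ⟨ha, hb⟩ | ⟨ha, hb⟩
  · exact Φ_rejection_le_of_nonneg hc ha hb
  · convert Φ_rejection_le_of_nonneg hc (neg_nonneg.2 ha) (neg_nonneg.2 hb) using 1
    ring_nf

lemma P2_rejection_le (c μ₁ μ₂ : ℝ) :
    P2 {p : ℝ × ℝ | (μ₁ + p.1) * (μ₂ + p.2) < 0 ∧ c < |μ₁ + p.1| ∧ c < |μ₂ + p.2|}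
      ≤ ENNReal.ofReal (Φ (-c - μ₁) * Φ (μ₂ - c) + Φ (μ₁ - c) * Φ (-c - μ₂)) := by
  have hsub : {p : ℝ × ℝ | (μ₁ + p.1) * (μ₂ + p.2) < 0 ∧ c < |μ₁ + p.1| ∧ c < |μ₂ + p.2|} ⊆
      Iic (-c - μ₁) ×ˢ Ioi (c - μ₂) ∪ Ioi (c - μ₁) ×ˢ Iic (-c - μ₂) := by
    rintro ⟨x₁, x₂⟩ ⟨hneg, h₁, h₂⟩
    rcases mul_neg_iff.1 hneg with ⟨hpos₁, hneg₂⟩ | ⟨hneg₁, hpos₂⟩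
    · rw [abs_of_pos hpos₁] at h₁
      rw [abs_of_neg hneg₂] at h₂
      exact Or.inr ⟨show c - μ₁ < x₁ by linarith, show x₂ ≤ -c - μ₂ by linarith⟩
    · rw [abs_of_neg hneg₁] at h₁
      rw [abs_of_pos hpos₂] at h₂
      exact Or.inl ⟨show x₁ ≤ -c - μ₁ by linarith, show c - μ₂ < x₂ by linarith⟩
  calc _ ≤ P2 (Iic (-c - μ₁) ×ˢ Ioi (c - μ₂)) + P2 (Ioi (c - μ₁) ×ˢ Iic (-c - μ₂)) :=
        (measure_mono hsub).trans (measure_union_le _ _)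
    _ = _ := by
        rw [P2, Measure.prod_prod, Measure.prod_prod, stdGauss_Iic, stdGauss_Iic, stdGauss_Ioi,
          stdGauss_Ioi, neg_sub, neg_sub, ← ENNReal.ofReal_mul (Φ_nonneg _),
          ← ENNReal.ofReal_mul (Φ_nonneg _), ← ENNReal.ofReal_add
            (mul_nonneg (Φ_nonneg _) (Φ_nonneg _)) (mul_nonneg (Φ_nonneg _) (Φ_nonneg _))]

/-- Size control of the recommended sign-congruence test (uncorrelated case):
for independent standard normals and any null parameter, the rejection
probability is at most α. -/
theorem stmt0 (α c : ℝ) (hα : α ∈ Set.Ioo (0:ℝ) (1/2)) (hc : Φ c = 1 - α)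
    (μ₁ μ₂ : ℝ) (h : μ₁ * μ₂ ≥ 0) :
    P2 {p : ℝ × ℝ | (μ₁ + p.1) * (μ₂ + p.2) < 0 ∧ c < |μ₁ + p.1| ∧ c < |μ₂ + p.2|}
      ≤ ENNReal.ofReal α := by
  have hc₀ : 0 ≤ c := (Φ_mono.reflect_lt (by rw [Φ_zero, hc]; linarith [hα.2])).le
  have hα_eq : α = Φ (-c) := by rw [Φ_neg, hc]; ring
  exact (P2_rejection_le c μ₁ μ₂).trans
    (ENNReal.ofReal_le_ofReal (hα_eq ▸ Φ_rejection_le hc₀ h))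
end

section
/- Let (X₁, X₂) be bivariate standard normal with correlation ρ ≥ 0. Then for all s, t ∈ ℝ, P(X₁ ≤ s and X₂ ≤ t) ≥ P(X₁ ≤ s)·P(X₂ ≤ t) (positive quadrant dependence). Equivalently, P(X₁ ≤ s and X₂ ≥ t) ≤ P(X₁ ≤ s)·P(X₂ ≥ t). -/
open MeasureTheory ProbabilityTheory

instance inst_s5 : IsProbabilityMeasure stdGauss := by unfold stdGauss; infer_instance
instance : IsProbabilityMeasure P2 := by unfold P2; infer_instance

open Set ENNReal

/-- One-sided Harris inequality for an antitone function. -/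
lemma harris_anti (μ : Measure ℝ) [IsProbabilityMeasure μ] (G : ℝ → ℝ≥0∞)
    (hG : Antitone G) (s : ℝ) :
    μ (Iic s) * ∫⁻ x, G x ∂μ ≤ ∫⁻ x in Iic s, G x ∂μ := by
  have hA : MeasurableSet (Iic s) := measurableSet_Iic
  have h1 : ∫⁻ x, G x ∂μ = (∫⁻ x in Iic s, G x ∂μ) + ∫⁻ x in (Iic s)ᶜ, G x ∂μ :=
    (lintegral_add_compl _ hA).symm
  have hlow : G s * μ (Iic s) ≤ ∫⁻ x in Iic s, G x ∂μ := by
    rw [← setLIntegral_const (Iic s) (G s)]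
    exact setLIntegral_mono' hA fun x hx => hG hx
  have hhigh : ∫⁻ x in (Iic s)ᶜ, G x ∂μ ≤ G s * μ (Iic s)ᶜ := by
    rw [← setLIntegral_const ((Iic s)ᶜ) (G s)]
    exact setLIntegral_mono' hA.compl fun x hx => hG (le_of_lt (by simpa using hx))
  have hsum : μ (Iic s) + μ (Iic s)ᶜ = 1 := by
    rw [measure_add_measure_compl hA, measure_univ]
  calc μ (Iic s) * ∫⁻ x, G x ∂μ
      = μ (Iic s) * ∫⁻ x in Iic s, G x ∂μ + μ (Iic s) * ∫⁻ x in (Iic s)ᶜ, G x ∂μ := by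
        rw [h1, mul_add]
    _ ≤ μ (Iic s) * ∫⁻ x in Iic s, G x ∂μ + μ (Iic s) * (G s * μ (Iic s)ᶜ) := by
        gcongr
    _ = μ (Iic s) * ∫⁻ x in Iic s, G x ∂μ + μ (Iic s)ᶜ * (G s * μ (Iic s)) := by
        ring
    _ ≤ μ (Iic s) * ∫⁻ x in Iic s, G x ∂μ + μ (Iic s)ᶜ * ∫⁻ x in Iic s, G x ∂μ := by
        gcongr
    _ = (μ (Iic s) + μ (Iic s)ᶜ) * ∫⁻ x in Iic s, G x ∂μ := by ring
    _ = ∫⁻ x in Iic s, G x ∂μ := by rw [hsum, one_mul]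

/-- One-sided Harris inequality for a monotone function. -/
lemma harris_mono (μ : Measure ℝ) [IsProbabilityMeasure μ] (G : ℝ → ℝ≥0∞)
    (hG : Monotone G) (s : ℝ) :
    ∫⁻ x in Iic s, G x ∂μ ≤ μ (Iic s) * ∫⁻ x, G x ∂μ := by
  have hA : MeasurableSet (Iic s) := measurableSet_Iic
  have h1 : ∫⁻ x, G x ∂μ = (∫⁻ x in Iic s, G x ∂μ) + ∫⁻ x in (Iic s)ᶜ, G x ∂μ :=
    (lintegral_add_compl _ hA).symm
  have hlow : ∫⁻ x in Iic s, G x ∂μ ≤ G s * μ (Iic s) := by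
    rw [← setLIntegral_const (Iic s) (G s)]
    exact setLIntegral_mono' hA fun x hx => hG hx
  have hhigh : G s * μ (Iic s)ᶜ ≤ ∫⁻ x in (Iic s)ᶜ, G x ∂μ := by
    rw [← setLIntegral_const ((Iic s)ᶜ) (G s)]
    exact setLIntegral_mono' hA.compl fun x hx => hG (le_of_lt (by simpa using hx))
  have hsum : μ (Iic s) + μ (Iic s)ᶜ = 1 := by
    rw [measure_add_measure_compl hA, measure_univ]
  calc ∫⁻ x in Iic s, G x ∂μ
      = (μ (Iic s) + μ (Iic s)ᶜ) * ∫⁻ x in Iic s, G x ∂μ := by rw [hsum, one_mul]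
    _ = μ (Iic s) * ∫⁻ x in Iic s, G x ∂μ + μ (Iic s)ᶜ * ∫⁻ x in Iic s, G x ∂μ := by ring
    _ ≤ μ (Iic s) * ∫⁻ x in Iic s, G x ∂μ + μ (Iic s)ᶜ * (G s * μ (Iic s)) := by gcongr
    _ = μ (Iic s) * ∫⁻ x in Iic s, G x ∂μ + μ (Iic s) * (G s * μ (Iic s)ᶜ) := by ring
    _ ≤ μ (Iic s) * ∫⁻ x in Iic s, G x ∂μ + μ (Iic s) * ∫⁻ x in (Iic s)ᶜ, G x ∂μ := by gcongr
    _ = μ (Iic s) * ∫⁻ x, G x ∂μ := by rw [h1, mul_add]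

/-- Positive quadrant dependence of a bivariate standard normal with correlation
ρ ≥ 0, constructed from two independent standard normals. -/
theorem stmt5 (ρ : ℝ) (hρ : ρ ∈ Set.Icc (0:ℝ) 1) (s t : ℝ)
    (X₂ : ℝ × ℝ → ℝ) (hX₂ : X₂ = fun p => ρ * p.1 + Real.sqrt (1 - ρ ^ 2) * p.2) :
    P2 {p : ℝ × ℝ | p.1 ≤ s ∧ X₂ p ≤ t} ≥ P2 {p : ℝ × ℝ | p.1 ≤ s} * P2 {p : ℝ × ℝ | X₂ p ≤ t}
    ∧ P2 {p : ℝ × ℝ | p.1 ≤ s ∧ t ≤ X₂ p}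
        ≤ P2 {p : ℝ × ℝ | p.1 ≤ s} * P2 {p : ℝ × ℝ | t ≤ X₂ p} := by
  obtain ⟨hρ0, hρ1⟩ := hρ
  subst hX₂
  set c : ℝ := Real.sqrt (1 - ρ ^ 2) with hc
  set μ := stdGauss with hμdef
  -- the fiberwise measures
  set G : ℝ → ℝ≥0∞ := fun x => μ {y : ℝ | ρ * x + c * y ≤ t} with hGdef
  set G' : ℝ → ℝ≥0∞ := fun x => μ {y : ℝ | t ≤ ρ * x + c * y} with hG'def
  have hGanti : Antitone G := by
    intro a b hab
    apply measure_mono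
    intro y hy
    simp only [Set.mem_setOf_eq] at *
    nlinarith [mul_le_mul_of_nonneg_left hab hρ0]
  have hG'mono : Monotone G' := by
    intro a b hab
    apply measure_mono
    intro y hy
    simp only [Set.mem_setOf_eq] at *
    nlinarith [mul_le_mul_of_nonneg_left hab hρ0]
  have hmf : Measurable fun p : ℝ × ℝ => ρ * p.1 + c * p.2 := by fun_prop
  have hS1 : MeasurableSet {p : ℝ × ℝ | p.1 ≤ s ∧ ρ * p.1 + c * p.2 ≤ t} := by
    exact (measurableSet_le measurable_fst measurable_const).inter
      (measurableSet_le hmf measurable_const)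
  have hS2 : MeasurableSet {p : ℝ × ℝ | ρ * p.1 + c * p.2 ≤ t} :=
    measurableSet_le hmf measurable_const
  have hS3 : MeasurableSet {p : ℝ × ℝ | p.1 ≤ s ∧ t ≤ ρ * p.1 + c * p.2} :=
    (measurableSet_le measurable_fst measurable_const).inter
      (measurableSet_le measurable_const hmf)
  have hS4 : MeasurableSet {p : ℝ × ℝ | t ≤ ρ * p.1 + c * p.2} :=
    measurableSet_le measurable_const hmf
  -- the marginal event
  have hPA : P2 {p : ℝ × ℝ | p.1 ≤ s} = μ (Iic s) := by
    have : {p : ℝ × ℝ | p.1 ≤ s} = (Iic s) ×ˢ (univ : Set ℝ) := by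
      ext p; simp [Set.mem_setOf_eq]
    rw [this]
    show (μ.prod μ) _ = _
    rw [Measure.prod_prod, measure_univ, mul_one]
  -- joint events via Fubini
  have hind : ∀ (x : ℝ), μ (Prod.mk x ⁻¹' {p : ℝ × ℝ | p.1 ≤ s ∧ ρ * p.1 + c * p.2 ≤ t})
      = (Iic s).indicator G x := by
    intro x
    by_cases hx : x ≤ s
    · have : Prod.mk x ⁻¹' {p : ℝ × ℝ | p.1 ≤ s ∧ ρ * p.1 + c * p.2 ≤ t}
          = {y : ℝ | ρ * x + c * y ≤ t} := by
        ext y; simp [hx]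
      rw [this, Set.indicator_of_mem (by simpa using hx)]
    · have : Prod.mk x ⁻¹' {p : ℝ × ℝ | p.1 ≤ s ∧ ρ * p.1 + c * p.2 ≤ t} = (∅ : Set ℝ) := by
        ext y; simp [hx]
      rw [this, Set.indicator_of_notMem (by simpa using hx)]
      simp
  have hind' : ∀ (x : ℝ), μ (Prod.mk x ⁻¹' {p : ℝ × ℝ | p.1 ≤ s ∧ t ≤ ρ * p.1 + c * p.2})
      = (Iic s).indicator G' x := by
    intro x
    by_cases hx : x ≤ s
    · have : Prod.mk x ⁻¹' {p : ℝ × ℝ | p.1 ≤ s ∧ t ≤ ρ * p.1 + c * p.2}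
          = {y : ℝ | t ≤ ρ * x + c * y} := by
        ext y; simp [hx]
      rw [this, Set.indicator_of_mem (by simpa using hx)]
    · have : Prod.mk x ⁻¹' {p : ℝ × ℝ | p.1 ≤ s ∧ t ≤ ρ * p.1 + c * p.2} = (∅ : Set ℝ) := by
        ext y; simp [hx]
      rw [this, Set.indicator_of_notMem (by simpa using hx)]
      simp
  have hPJ : P2 {p : ℝ × ℝ | p.1 ≤ s ∧ ρ * p.1 + c * p.2 ≤ t} = ∫⁻ x in Iic s, G x ∂μ := by
    show (μ.prod μ) _ = _
    rw [Measure.prod_apply hS1]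
    rw [← lintegral_indicator measurableSet_Iic]
    exact lintegral_congr hind
  have hPJ' : P2 {p : ℝ × ℝ | p.1 ≤ s ∧ t ≤ ρ * p.1 + c * p.2} = ∫⁻ x in Iic s, G' x ∂μ := by
    show (μ.prod μ) _ = _
    rw [Measure.prod_apply hS3]
    rw [← lintegral_indicator measurableSet_Iic]
    exact lintegral_congr hind'
  have hPB : P2 {p : ℝ × ℝ | ρ * p.1 + c * p.2 ≤ t} = ∫⁻ x, G x ∂μ := by
    show (μ.prod μ) _ = _
    rw [Measure.prod_apply hS2]
    rfl
  have hPB' : P2 {p : ℝ × ℝ | t ≤ ρ * p.1 + c * p.2} = ∫⁻ x, G' x ∂μ := by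
    show (μ.prod μ) _ = _
    rw [Measure.prod_apply hS4]
    rfl
  constructor
  · rw [ge_iff_le, hPA, hPB, hPJ]
    exact harris_anti μ G hGanti s
  · rw [hPA, hPB', hPJ']
    exact harris_mono μ G' hG'mono s
end

section
/- Let p_I, p_C ∈ (0,1) with p_I ≠ p_C, and let a, b, u, v ∈ ℝ. Define e_T|A = b, e_U|N = v, e_T|C = (p_I/(p_I−p_C))·a − (p_C/(p_I−p_C))·b, and e_U|C = ((1−p_C)/(p_I−p_C))·u − ((1−p_I)/(p_I−p_C))·v, and define τ = (e_U|C − e_U|N)·(e_T|A − e_T|C). Then τ = (p_I(1−p_C)/(p_I−p_C)²)·(u − v)·(b − a). -/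
open MeasureTheory ProbabilityTheory

/-- The algebraic identity underlying Proposition 5: the product parameter τ in
Kowalski's setting factors as a positive constant times (u−v)(b−a). -/
theorem stmt11 (pI pC a b u v : ℝ)
    (hI : pI ∈ Set.Ioo (0:ℝ) 1) (hC : pC ∈ Set.Ioo (0:ℝ) 1) (hne : pI ≠ pC)
    (eTA eUN eTC eUC τ : ℝ)
    (h1 : eTA = b) (h2 : eUN = v)
    (h3 : eTC = (pI / (pI - pC)) * a - (pC / (pI - pC)) * b)
    (h4 : eUC = ((1 - pC) / (pI - pC)) * u - ((1 - pI) / (pI - pC)) * v)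
    (hτ : τ = (eUC - eUN) * (eTA - eTC)) :
    τ = (pI * (1 - pC) / (pI - pC) ^ 2) * (u - v) * (b - a) := by
  have hd : pI - pC ≠ 0 := sub_ne_zero.mpr hne
  subst h1 h2 h3 h4 hτ
  field_simp
  ring
end

section
/- Let X be a standard normal random variable, ρ = −1, μ₁ = μ₂ = 0, and consider data (y₁, y₂) = (X, −X). The heuristic bootstrap test rejects iff P*((y₁+X*)(y₂−X*) > 0) < α where X* is an independent standard normal. Show that P*((X+X*)(−X−X*) > 0) = P*(−(X+X*)² > 0) = 0 < α almost surely, so the heuristic bootstrap test rejects with probability 1 even though (μ₁, μ₂) = (0,0) satisfies the null hypothesis μ₁·μ₂ ≥ 0. -/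
open MeasureTheory ProbabilityTheory

/-- Heuristic bootstrap with ρ = −1 and (μ₁,μ₂) = (0,0): the null μ₁·μ₂ ≥ 0
holds, yet the bootstrap product is −(y+X*)², positive with probability 0 for
every observed y, so the test rejects with probability 1. -/
theorem stmt18 (α : ℝ) (hα : α ∈ Set.Ioo (0:ℝ) 1) :
    (0:ℝ) * 0 ≥ 0
    ∧ (∀ y : ℝ, stdGauss {x : ℝ | (y + x) * (-(y + x)) > 0} = 0)
    ∧ stdGauss {y : ℝ | (stdGauss {x : ℝ | (y + x) * (-(y + x)) > 0}).toReal < α} = 1 := by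
  have hempty : ∀ y : ℝ, {x : ℝ | (y + x) * (-(y + x)) > 0} = ∅ := by
    intro y
    ext x
    simp only [Set.mem_setOf_eq, Set.mem_empty_iff_false, iff_false, not_lt]
    nlinarith [sq_nonneg (y + x)]
  have hzero : ∀ y : ℝ, stdGauss {x : ℝ | (y + x) * (-(y + x)) > 0} = 0 := by
    intro y; rw [hempty y]; simp
  refine ⟨by norm_num, hzero, ?_⟩
  have : {y : ℝ | (stdGauss {x : ℝ | (y + x) * (-(y + x)) > 0}).toReal < α} = Set.univ := by
    ext y
    simp only [Set.mem_setOf_eq, Set.mem_univ, iff_true]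
    rw [hzero y]; simpa using hα.1
  rw [this]
  have : IsProbabilityMeasure stdGauss := by unfold stdGauss; infer_instance
  exact measure_univ
end
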